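/- Let q be a power of an odd prime with q ≡ 1 (mod 3) and F = 𝔽_q. Let φ be an automorphism of the graph R and let r, w ∈ F. If φ([0,1,r]) = [0,1,w], then φ([0,0,r−1]) = [0,0,w−1]. -/

import Mathlib

/-!
Automorphisms preserve every relation defined from adjacency alone. Call `B` a partner of `A`
(`IsPartner`) if `A` and `B` have no common neighbour, some neighbour `Q` of `B` off `A` has exactly
`q - 1` neighbours sharing a neighbour with `A`, and at most one neighbour of `B` off `A` has any
such neighbour. For a line `A = [0, β, γ]` and a point `Q` off it, the neighbours of `Q` sharing a
neighbour with `A` correspond to the nonzero roots of a quadratic, so once `q ≥ 4` the count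
`q - 1` forces that quadratic to vanish identically. Solving these equations: `[0, 0, γ - 1]` is a
partner of `[0, 1, γ]`, whose only other possible partner is `[0, -1, γ - 2]`; `[0, 1, γ]` is a
partner of `[0, 0, γ]`; and in odd characteristic `[0, -1, γ]` has no partner at all. So
`φ [0, 0, r - 1]` is a partner of `[0, 1, w]` that has a partner itself, i.e. `[0, 0, w - 1]`.
-/

/-- Vertices: points (left component) and lines (right component), each a triple over `F`. -/
abbrev Vtx (F : Type) := (F × F × F) ⊕ (F × F × F)

/-- Adjacency for the graph `Γ_F(p₁ℓ₁, g(p₁,p₂,ℓ₁))`: a point `(p₁,p₂,p₃)` and a line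
`[ℓ₁,ℓ₂,ℓ₃]` are adjacent iff `p₂+ℓ₂ = p₁ℓ₁` and `p₃+ℓ₃ = g(p₁,p₂,ℓ₁)`. -/
def gammaAdj (F : Type) [Field F] (g : F → F → F → F) : Vtx F → Vtx F → Prop
  | Sum.inl p, Sum.inr l => p.2.1 + l.2.1 = p.1 * l.1 ∧ p.2.2 + l.2.2 = g p.1 p.2.1 l.1
  | Sum.inr l, Sum.inl p => p.2.1 + l.2.1 = p.1 * l.1 ∧ p.2.2 + l.2.2 = g p.1 p.2.1 l.1
  | _, _ => False

/-- The bipartite graph `Γ_F(p₁ℓ₁, g(p₁,p₂,ℓ₁))`. -/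
def Gamma (F : Type) [Field F] (g : F → F → F → F) : SimpleGraph (Vtx F) where
  Adj := gammaAdj F g
  symm := by
    constructor
    intro v w h
    match v, w with
    | Sum.inl p, Sum.inr l => exact h
    | Sum.inr l, Sum.inl p => exact h
  loopless := by
    constructor
    intro v h
    match v with
    | Sum.inl p => exact h
    | Sum.inr l => exact h

/-- The graph `R = Γ_F(p₁ℓ₁, p₁p₂ℓ₁(p₁+p₂+p₁p₂))`. -/
def RGraph (F : Type) [Field F] : SimpleGraph (Vtx F) :=
  Gamma F (fun p1 p2 l1 => p1 * p2 * l1 * (p1 + p2 + p1 * p2))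

namespace SimpleGraph

variable {V W : Type*}

def linkedNeighbors (G : SimpleGraph V) (A Q : V) : Set V :=
  {N | G.Adj Q N ∧ ∃ X, G.Adj N X ∧ G.Adj X A}

structure IsPartner (G : SimpleGraph V) (n : ℕ) (A B : V) : Prop where
  not_adj_of_adj : ∀ X, G.Adj A X → ¬ G.Adj B X
  exists_ncard : ∃ Q, G.Adj B Q ∧ ¬ G.Adj A Q ∧ (G.linkedNeighbors A Q).ncard = n
  subsingleton : {Q | G.Adj B Q ∧ ¬ G.Adj A Q ∧ (G.linkedNeighbors A Q).Nonempty}.Subsingleton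

variable {G : SimpleGraph V} {G' : SimpleGraph W}

lemma Iso.linkedNeighbors_map (φ : G ≃g G') (A Q : V) :
    G'.linkedNeighbors (φ A) (φ Q) = φ '' G.linkedNeighbors A Q := by
  ext N
  obtain ⟨N, rfl⟩ := φ.surjective N
  simp only [φ.injective.mem_set_image, linkedNeighbors, Set.mem_ofPred_eq, φ.surjective.exists,
    φ.map_adj_iff]

lemma IsPartner.map (φ : G ≃g G') {n : ℕ} {A B : V} (h : G.IsPartner n A B) :
    G'.IsPartner n (φ A) (φ B) where
  not_adj_of_adj := φ.surjective.forall.2 fun X => by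
    simpa only [φ.map_adj_iff] using h.not_adj_of_adj X
  exists_ncard := by
    obtain ⟨Q, hBQ, hAQ, hQ⟩ := h.exists_ncard
    refine ⟨φ Q, φ.map_adj_iff.2 hBQ, mt φ.map_adj_iff.1 hAQ, ?_⟩
    rw [φ.linkedNeighbors_map, Set.ncard_image_of_injective _ φ.injective, hQ]
  subsingleton := (h.subsingleton.image φ).anti <| φ.surjective.forall.2 fun Q ⟨hBQ, hAQ, hQ⟩ =>
    ⟨Q, ⟨φ.map_adj_iff.1 hBQ, mt φ.map_adj_iff.2 hAQ,
      Set.image_nonempty.1 (φ.linkedNeighbors_map A Q ▸ hQ)⟩, rfl⟩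

end SimpleGraph

lemma eq_zero_of_three_roots {F : Type*} [Field F] {a b c x y z : F} (hxy : x ≠ y) (hxz : x ≠ z)
    (hyz : y ≠ z) (hx : a * x ^ 2 + b * x + c = 0) (hy : a * y ^ 2 + b * y + c = 0)
    (hz : a * z ^ 2 + b * z + c = 0) : a = 0 ∧ b = 0 ∧ c = 0 := by
  have hxy' : a * (x + y) + b = 0 :=
    mul_left_cancel₀ (sub_ne_zero.2 hxy) (by linear_combination hx - hy)
  have hxz' : a * (x + z) + b = 0 :=
    mul_left_cancel₀ (sub_ne_zero.2 hxz) (by linear_combination hx - hz)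
  have ha : a = 0 := mul_left_cancel₀ (sub_ne_zero.2 hyz) (by linear_combination hxy' - hxz')
  have hb : b = 0 := by linear_combination hxy' - (x + y) * ha
  exact ⟨ha, hb, by linear_combination hx - x ^ 2 * ha - x * hb⟩

namespace RGraph

variable {F : Type} [Field F]

lemma adj_inr_inl {l₁ l₂ l₃ p₁ p₂ p₃ : F} :
    (RGraph F).Adj (.inr (l₁, l₂, l₃)) (.inl (p₁, p₂, p₃)) ↔
      p₂ + l₂ = p₁ * l₁ ∧ p₃ + l₃ = p₁ * p₂ * l₁ * (p₁ + p₂ + p₁ * p₂) := Iff.rfl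

lemma adj_inl_inr {l₁ l₂ l₃ p₁ p₂ p₃ : F} :
    (RGraph F).Adj (.inl (p₁, p₂, p₃)) (.inr (l₁, l₂, l₃)) ↔
      p₂ + l₂ = p₁ * l₁ ∧ p₃ + l₃ = p₁ * p₂ * l₁ * (p₁ + p₂ + p₁ * p₂) := Iff.rfl

lemma not_adj_inl_inl (p p' : F × F × F) : ¬ (RGraph F).Adj (.inl p) (.inl p') := id

lemma not_adj_inr_inr (l l' : F × F × F) : ¬ (RGraph F).Adj (.inr l) (.inr l') := id

lemma adj_zero_line_iff {β γ b c d : F} :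
    (RGraph F).Adj (.inr (0, β, γ)) (.inl (b, c, d)) ↔ c = -β ∧ d = -γ := by
  simp only [adj_inr_inl, mul_zero, zero_mul, ← eq_neg_iff_add_eq_zero]

def lineThrough (b c d x : F) : Vtx F := .inr (x, b * x - c, b * c * x * (b + c + b * c) - d)

lemma lineThrough_injective (b c d : F) : Function.Injective (lineThrough b c d) := by
  intro x y h
  simp only [lineThrough, Sum.inr.injEq, Prod.mk.injEq] at h
  exact h.1

lemma adj_inl_iff_eq_lineThrough {b c d : F} {N : Vtx F} :
    (RGraph F).Adj (.inl (b, c, d)) N ↔ ∃ x, N = lineThrough b c d x := by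
  constructor
  · rintro h
    rcases N with p | ⟨x, l₂, l₃⟩
    · exact (not_adj_inl_inl _ _ h).elim
    obtain ⟨h₂, h₃⟩ := adj_inl_inr.1 h
    exact ⟨x, by simp only [lineThrough, Sum.inr.injEq, Prod.mk.injEq]; grind⟩
  · rintro ⟨x, rfl⟩
    exact adj_inl_inr.2 ⟨by ring, by ring⟩

-- `lineThrough b c d x` meets a neighbour `(a, -β, -γ)` of `[0, β, γ]` iff `a x = b x - c - β` and
-- `x (bcx(b + c + bc) - d - γ) = -β (a x) ((1 - β) a x - β x)`; for `x ≠ 0`, eliminating `a x`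
-- leaves the quadratic `linkCoeff₂ x² + linkCoeff₁ x + linkCoeff₀ = 0`.
def linkCoeff₂ (β b c : F) : F := b * (c * (b + c + b * c) - β ^ 2 + β * (1 - β) * b)

def linkCoeff₁ (β γ b c d : F) : F :=
  -(d + γ) + β ^ 2 * (c + β) - 2 * β * (1 - β) * b * (c + β)

def linkCoeff₀ (β c : F) : F := β * (1 - β) * (c + β) ^ 2

def linkRoots (β γ b c d : F) : Set F :=
  {x | x ≠ 0 ∧ linkCoeff₂ β b c * x ^ 2 + linkCoeff₁ β γ b c d * x + linkCoeff₀ β c = 0}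

section link

variable {β γ b c d : F}

lemma exists_adj_lineThrough_iff (hQ : ¬ (c = -β ∧ d = -γ)) (x : F) :
    (∃ X, (RGraph F).Adj (lineThrough b c d x) X ∧ (RGraph F).Adj X (.inr (0, β, γ))) ↔
      x ∈ linkRoots β γ b c d := by
  rw [linkRoots, Set.mem_ofPred_eq]
  constructor
  · rintro ⟨X, hNX, hXA⟩
    rcases X with ⟨a, x₂, x₃⟩ | l
    · obtain ⟨rfl, rfl⟩ := adj_zero_line_iff.1 hXA.symm
      obtain ⟨h₂, h₃⟩ := adj_inr_inl.1 hNX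
      refine ⟨?_, ?_⟩
      · rintro rfl
        exact hQ ⟨by linear_combination -h₂, by linear_combination -h₃⟩
      · unfold linkCoeff₂ linkCoeff₁ linkCoeff₀
        linear_combination x * h₃ + (β * (1 - β) * (b * x - c - β + a * x) - β ^ 2 * x) * h₂
    · exact (not_adj_inr_inr _ _ hNX).elim
  · rintro ⟨hx, hquad⟩
    set a := (b * x - c - β) / x
    have ha : a * x = b * x - c - β := div_mul_cancel₀ _ hx
    refine ⟨.inl (a, -β, -γ), adj_inr_inl.2 ⟨by linear_combination -ha, ?_⟩,
      (adj_zero_line_iff.2 ⟨rfl, rfl⟩).symm⟩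
    unfold linkCoeff₂ linkCoeff₁ linkCoeff₀ at hquad
    refine mul_left_cancel₀ hx ?_
    linear_combination hquad + (β * (1 - β) * (a * x + (b * x - c - β)) - β ^ 2 * x) * ha

lemma linkedNeighbors_eq_image (hQ : ¬ (c = -β ∧ d = -γ)) :
    (RGraph F).linkedNeighbors (.inr (0, β, γ)) (.inl (b, c, d)) =
      lineThrough b c d '' linkRoots β γ b c d := by
  ext N
  simp only [SimpleGraph.linkedNeighbors, adj_inl_iff_eq_lineThrough, Set.mem_ofPred_eq,
    Set.mem_image]
  constructor
  · rintro ⟨⟨x, rfl⟩, hX⟩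
    exact ⟨x, (exists_adj_lineThrough_iff hQ x).1 hX, rfl⟩
  · rintro ⟨x, hx, rfl⟩
    exact ⟨⟨x, rfl⟩, (exists_adj_lineThrough_iff hQ x).2 hx⟩

lemma ncard_linkedNeighbors (hQ : ¬ (c = -β ∧ d = -γ)) :
    ((RGraph F).linkedNeighbors (.inr (0, β, γ)) (.inl (b, c, d))).ncard =
      (linkRoots β γ b c d).ncard := by
  rw [linkedNeighbors_eq_image hQ, Set.ncard_image_of_injective _ (lineThrough_injective b c d)]

lemma ncard_linkedNeighbors_of_linkCoeff_eq_zero [Fintype F] (hQ : ¬ (c = -β ∧ d = -γ))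
    (h₂ : linkCoeff₂ β b c = 0) (h₁ : linkCoeff₁ β γ b c d = 0) (h₀ : linkCoeff₀ β c = 0) :
    ((RGraph F).linkedNeighbors (.inr (0, β, γ)) (.inl (b, c, d))).ncard = Fintype.card F - 1 := by
  simp only [ncard_linkedNeighbors hQ, linkRoots, h₂, h₁, h₀, zero_mul, add_zero, and_true]
  rw [← Set.compl_singleton_eq, Set.ncard_compl, Set.ncard_singleton, Nat.card_eq_fintype_card]

lemma linkedNeighbors_eq_empty (hQ : ¬ (c = -β ∧ d = -γ)) (h₂ : linkCoeff₂ β b c ≠ 0)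
    (h₁ : linkCoeff₁ β γ b c d = 0) (h₀ : linkCoeff₀ β c = 0) :
    (RGraph F).linkedNeighbors (.inr (0, β, γ)) (.inl (b, c, d)) = ∅ := by
  simp [linkedNeighbors_eq_image hQ, linkRoots, h₁, h₀, h₂]

lemma linkCoeff_eq_zero_of_ncard [Fintype F] (hF : 4 ≤ Fintype.card F) (hQ : ¬ (c = -β ∧ d = -γ))
    (h : ((RGraph F).linkedNeighbors (.inr (0, β, γ)) (.inl (b, c, d))).ncard =
      Fintype.card F - 1) :
    linkCoeff₂ β b c = 0 ∧ linkCoeff₁ β γ b c d = 0 ∧ linkCoeff₀ β c = 0 := by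
  rw [ncard_linkedNeighbors hQ] at h
  obtain ⟨x, y, z, hx, hy, hz, hxy, hxz, hyz⟩ :=
    (Set.two_lt_ncard_iff (Set.toFinite _)).1 (h ▸ show 2 < Fintype.card F - 1 by omega)
  exact eq_zero_of_three_roots hxy hxz hyz hx.2 hy.2 hz.2

end link

lemma linkedNeighbors_inr_inr (l l' : F × F × F) :
    (RGraph F).linkedNeighbors (.inr l) (.inr l') = ∅ := by
  refine Set.eq_empty_of_forall_notMem ?_
  rintro (N | N) ⟨hQN, X | X, hNX, hXA⟩
  exacts [not_adj_inl_inl _ _ hNX, not_adj_inr_inr _ _ hXA, not_adj_inr_inr _ _ hQN,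
    not_adj_inr_inr _ _ hQN]

lemma isPartner_line_zero [Fintype F] {β β' γ γ' : F} (hβ : β * (1 - β) = 0)
    (hβ' : β' * (1 - β') = 0) (hne : β ≠ β') (hγ : γ' = γ - β * (β - β')) :
    (RGraph F).IsPartner (Fintype.card F - 1) (.inr (0, β, γ)) (.inr (0, β', γ')) := by
  have hQ : ¬ (-β' = -β ∧ -γ' = -γ) := fun h => hne (neg_inj.1 h.1).symm
  have h₁ (b : F) : linkCoeff₁ β γ b (-β') (-γ') = 0 := by
    unfold linkCoeff₁
    linear_combination hγ - (β - β') * (1 + 2 * b) * hβ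
  have h₀ : linkCoeff₀ β (-β') = 0 := by
    unfold linkCoeff₀
    linear_combination (β - β') ^ 2 * hβ
  refine ⟨?_, ?_, ?_⟩
  · rintro (⟨b, c, d⟩ | l) hAX hBX
    · exact hne (neg_inj.1 ((adj_zero_line_iff.1 hAX).1.symm.trans (adj_zero_line_iff.1 hBX).1))
    · exact not_adj_inr_inr _ _ hAX
  · refine ⟨.inl (0, -β', -γ'), adj_zero_line_iff.2 ⟨rfl, rfl⟩, mt adj_zero_line_iff.1 hQ,
      ncard_linkedNeighbors_of_linkCoeff_eq_zero hQ (zero_mul _) (h₁ 0) h₀⟩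
  · refine Set.subsingleton_of_forall_eq (.inl (0, -β', -γ')) ?_
    rintro (⟨b, c, d⟩ | l) ⟨hBQ, -, hQ'⟩
    · obtain ⟨rfl, rfl⟩ := adj_zero_line_iff.1 hBQ
      obtain rfl | hb := eq_or_ne b 0
      · rfl
      have h₂ : linkCoeff₂ β b (-β') = b * (β' - β) := by
        unfold linkCoeff₂
        linear_combination b * (b + 1) * hβ - b * (b + 1) * hβ'
      rw [linkedNeighbors_eq_empty hQ (h₂ ▸ mul_ne_zero hb (sub_ne_zero.2 hne.symm)) (h₁ b) h₀]
        at hQ'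
      exact absurd hQ' Set.not_nonempty_empty
    · exact (not_adj_inr_inr _ _ hBQ).elim

section partner

variable [Fintype F] (hF : 4 ≤ Fintype.card F) {β γ : F} {B : Vtx F}
include hF

lemma exists_linkCoeff_eq_zero_of_isPartner
    (h : (RGraph F).IsPartner (Fintype.card F - 1) (.inr (0, β, γ)) B) :
    ∃ b c d, (RGraph F).Adj B (.inl (b, c, d)) ∧ ¬ (c = -β ∧ d = -γ) ∧
      linkCoeff₂ β b c = 0 ∧ linkCoeff₁ β γ b c d = 0 ∧ linkCoeff₀ β c = 0 := by
  obtain ⟨⟨b, c, d⟩ | l, hBQ, hAQ, hQ⟩ := h.exists_ncard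
  · have hQA : ¬ (c = -β ∧ d = -γ) := mt adj_zero_line_iff.2 hAQ
    exact ⟨b, c, d, hBQ, hQA, linkCoeff_eq_zero_of_ncard hF hQA hQ⟩
  · rw [linkedNeighbors_inr_inr, Set.ncard_empty] at hQ
    omega

lemma not_isPartner_line_zero (hβ : β * (1 - β) ≠ 0) :
    ¬ (RGraph F).IsPartner (Fintype.card F - 1) (.inr (0, β, γ)) B := by
  intro h
  obtain ⟨b, c, d, -, hQA, -, h₁, h₀⟩ := exists_linkCoeff_eq_zero_of_isPartner hF h
  have hc : c = -β := by
    unfold linkCoeff₀ at h₀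
    simpa [hβ, add_eq_zero_iff_eq_neg] using h₀
  subst hc
  refine hQA ⟨rfl, ?_⟩
  unfold linkCoeff₁ at h₁
  linear_combination -h₁

lemma exists_eq_of_isPartner_line_zero_one
    (h : (RGraph F).IsPartner (Fintype.card F - 1) (.inr (0, 1, γ)) B) :
    ∃ m, m ≠ 1 ∧ B = .inr (0, m, γ + m - 1) := by
  obtain ⟨b, c, d, hBQ, -, h₂, h₁, -⟩ := exists_linkCoeff_eq_zero_of_isPartner hF h
  rcases B with p | ⟨m₁, m₂, m₃⟩
  · exact (not_adj_inl_inl _ _ hBQ).elim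
  obtain ⟨hm₂, hm₃⟩ := adj_inr_inl.1 hBQ
  unfold linkCoeff₂ at h₂
  unfold linkCoeff₁ at h₁
  obtain rfl : m₃ = γ + m₂ - 1 := by linear_combination hm₃ + m₁ * h₂ - hm₂ + h₁
  have hP : (m₂ - 1) / m₁ * m₁ ≠ m₂ - 1 := fun hP =>
    h.not_adj_of_adj (.inl ((m₂ - 1) / m₁, -1, -γ)) (adj_zero_line_iff.2 ⟨rfl, rfl⟩)
      (adj_inr_inl.2 ⟨by linear_combination -hP, by linear_combination -hP⟩)
  obtain rfl : m₁ = 0 := by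
    by_contra hm₁
    exact hP (div_mul_cancel₀ _ hm₁)
  refine ⟨m₂, ?_, rfl⟩
  rintro rfl
  simp at hP

lemma eq_of_isPartner_line_zero_one
    (h : (RGraph F).IsPartner (Fintype.card F - 1) (.inr (0, 1, γ)) B) :
    B = .inr (0, 0, γ - 1) ∨ B = .inr (0, -1, γ - 2) := by
  obtain ⟨m, hm, rfl⟩ := exists_eq_of_isPartner_line_zero_one hF h
  have key (b : F) (hb : b * (m * b + m + 1) = 0) : (.inl (b, -m, -(γ + m - 1)) : Vtx F) ∈
      {Q | (RGraph F).Adj (.inr (0, m, γ + m - 1)) Q ∧ ¬ (RGraph F).Adj (.inr (0, 1, γ)) Q ∧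
        ((RGraph F).linkedNeighbors (.inr (0, 1, γ)) Q).Nonempty} := by
    have hQ : ¬ (-m = -1 ∧ -(γ + m - 1) = -γ) := fun h => hm (neg_inj.1 h.1)
    refine ⟨adj_zero_line_iff.2 ⟨rfl, rfl⟩, mt adj_zero_line_iff.1 hQ,
      Set.nonempty_of_ncard_ne_zero ?_⟩
    rw [ncard_linkedNeighbors_of_linkCoeff_eq_zero hQ
      (by unfold linkCoeff₂; linear_combination (m - 1) * hb)
      (by unfold linkCoeff₁; ring) (by unfold linkCoeff₀; ring)]
    omega
  have hm' : m = 0 ∨ m = -1 := by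
    by_contra! hm'
    have hb := h.subsingleton (key 0 (by ring)) (key (-(m + 1) / m) (by field_simp [hm'.1]; ring))
    simp only [Sum.inl.injEq, Prod.mk.injEq, and_true] at hb
    rw [eq_div_iff hm'.1, zero_mul] at hb
    exact hm'.2 (by linear_combination hb)
  rcases hm' with rfl | rfl
  · left
    ring_nf
  · right
    ring_nf

end partner

end RGraph

theorem aut_shift_general (q p e : ℕ) (hodd : Odd p)
    (hq : q = p ^ e) (hmod : q % 3 = 1) (F : Type) [Field F] [Fintype F]
    (hcard : Fintype.card F = q) (φ : RGraph F ≃g RGraph F) (r w : F)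
    (h : φ (Sum.inr (0, 1, r)) = Sum.inr (0, 1, w)) :
    φ (Sum.inr (0, 0, r - 1)) = Sum.inr (0, 0, w - 1) := by
  have hF_odd : Fintype.card F % 2 = 1 := hcard ▸ hq ▸ Nat.odd_iff.1 hodd.pow
  have hF : 4 ≤ Fintype.card F := by
    have := Fintype.one_lt_card (α := F)
    omega
  have h2 : (2 : F) ≠ 0 := Ring.two_ne_zero (mt FiniteField.even_card_iff_char_two.1 (by omega))
  have h₁ := (RGraph.isPartner_line_zero (γ := r) (γ' := r - 1) (by ring) (by ring) one_ne_zero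
    (by ring)).map φ
  rw [h] at h₁
  refine (RGraph.eq_of_isPartner_line_zero_one hF h₁).resolve_right fun hneg => ?_
  have h₀ := (RGraph.isPartner_line_zero (γ := r - 1) (γ' := r - 1) (by ring) (by ring)
    zero_ne_one (by ring)).map φ
  rw [hneg] at h₀
  exact RGraph.not_isPartner_line_zero hF (by norm_num [h2]) h₀

/-- Let `q` be a power of an odd prime with `q ≡ 1 (mod 3)` and `F = 𝔽_q`, and let `φ` be an
automorphism of `R`. If `φ([0,1,r]) = [0,1,w]`, then `φ([0,0,r−1]) = [0,0,w−1]`. -/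
theorem aut_shift (q p e : ℕ) (hp : p.Prime) (hodd : Odd p) (he : 1 ≤ e)
    (hq : q = p ^ e) (hmod : q % 3 = 1) (F : Type) [Field F] [Fintype F]
    (hcard : Fintype.card F = q) (φ : RGraph F ≃g RGraph F) (r w : F)
    (h : φ (Sum.inr (0, 1, r)) = Sum.inr (0, 1, w)) :
    φ (Sum.inr (0, 0, r - 1)) = Sum.inr (0, 0, w - 1) :=
  aut_shift_general q p e hodd hq hmod F hcard φ r w h
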